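/- If Z1 and Z2 are independent standard normal random variables, then W = Z1*Z2/sqrt(Z1^2 + Z2^2) is a normal random variable with mean 0 and variance 1/4. -/

import Mathlib

/-!
In polar coordinates `(r, θ)` we have `2 Z₁ Z₂ / √(Z₁² + Z₂²) = r sin 2θ`. The map
`(r, θ) ↦ (r, 2θ)` preserves Lebesgue measure on the plane, because angle doubling preserves
the Haar measure of the circle, and it preserves the radial Gaussian density, hence the law of
`(Z₁, Z₂)`. So `2W` has the law of `r sin θ = Z₂`, which is `N(0, 1)`.
-/

open MeasureTheory ProbabilityTheory Real Set Function
open scoped ENNReal NNReal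

theorem Function.Periodic.setLIntegral_Ioc_comp_mul_int {f : ℝ → ℝ≥0∞} {T : ℝ}
    (hT : 0 < T) (hf : Periodic f T) (hfm : Measurable f) {n : ℤ} (hn : n ≠ 0) (t : ℝ) :
    ∫⁻ x in Ioc t (t + T), f (n * x) = ∫⁻ x in Ioc t (t + T), f x := by
  have := Fact.mk hT
  set g : AddCircle T → ℝ≥0∞ := hf.lift
  have hg : Measurable g := by
    have : g = fun y => f (AddCircle.equivIoc T t y) := by
      funext y
      conv_lhs => rw [← AddCircle.coe_equivIoc (y := y) (a := t)]
      rfl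
    rw [this]
    exact hfm.comp (measurable_subtype_coe.comp (AddCircle.measurableEquivIoc T t).measurable)
  have hcomp (x : ℝ) : f (n * x) = g (n • (x : AddCircle T)) := by
    rw [← AddCircle.coe_zsmul, zsmul_eq_mul]; rfl
  simp_rw [hcomp]
  rw [AddCircle.lintegral_preimage T t (fun y => g (n • y)),
    (Measure.measurePreserving_zsmul volume hn).lintegral_comp hg,
    ← AddCircle.lintegral_preimage T t g]
  rfl

theorem MeasureTheory.MeasurePreserving.withDensity_comp {α β : Type*} [MeasurableSpace α]
    [MeasurableSpace β] {μ : Measure α} {ν : Measure β} {T : α → β}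
    (hT : MeasurePreserving T μ ν) {ρ : β → ℝ≥0∞} (hρ : Measurable ρ) :
    MeasurePreserving T (μ.withDensity (ρ ∘ T)) (ν.withDensity ρ) := by
  refine ⟨hT.measurable, Measure.ext fun s hs => ?_⟩
  rw [Measure.map_apply hT.measurable hs, withDensity_apply _ (hT.measurable hs),
    withDensity_apply _ hs]
  exact hT.setLIntegral_comp_preimage hs hρ

/-- In complex notation `z ↦ z ^ 2 / |z|`; it sends the origin to itself since `0 / 0 = 0`. -/
noncomputable def doubleAngle (p : ℝ × ℝ) : ℝ × ℝ :=
  ((p.1 ^ 2 - p.2 ^ 2) / √(p.1 ^ 2 + p.2 ^ 2), 2 * p.1 * p.2 / √(p.1 ^ 2 + p.2 ^ 2))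

lemma measurable_doubleAngle : Measurable doubleAngle := by
  unfold doubleAngle; fun_prop

lemma sq_add_sq_polarCoord_symm (p : ℝ × ℝ) :
    (polarCoord.symm p).1 ^ 2 + (polarCoord.symm p).2 ^ 2 = p.1 ^ 2 := by
  simp only [polarCoord_symm_apply]
  linear_combination p.1 ^ 2 * sin_sq_add_cos_sq p.2

lemma doubleAngle_polarCoord_symm {r : ℝ} (hr : 0 ≤ r) (θ : ℝ) :
    doubleAngle (polarCoord.symm (r, θ)) = polarCoord.symm (r, 2 * θ) := by
  rw [doubleAngle, sq_add_sq_polarCoord_symm, sqrt_sq hr]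
  simp only [polarCoord_symm_apply, cos_two_mul, sin_two_mul]
  rcases hr.eq_or_lt with rfl | hr
  · simp
  · ext <;> field_simp
    linear_combination -sin_sq_add_cos_sq θ

lemma sq_add_sq_doubleAngle (p : ℝ × ℝ) :
    (doubleAngle p).1 ^ 2 + (doubleAngle p).2 ^ 2 = p.1 ^ 2 + p.2 ^ 2 := by
  simp only [doubleAngle, div_pow, sq_sqrt (by positivity : 0 ≤ p.1 ^ 2 + p.2 ^ 2)]
  rcases (by positivity : 0 ≤ p.1 ^ 2 + p.2 ^ 2).eq_or_lt with h | h
  · rw [← h]; simp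
  · field_simp; ring

lemma lintegral_eq_lintegral_polarCoord_symm {F : ℝ × ℝ → ℝ≥0∞} (hF : Measurable F) :
    ∫⁻ p, F p = ∫⁻ r in Ioi 0, ∫⁻ θ in Ioc (-π) (-π + 2 * π),
      ENNReal.ofReal r * F (polarCoord.symm (r, θ)) := by
  rw [← lintegral_comp_polarCoord_symm, polarCoord_target, Measure.volume_eq_prod,
    ← Measure.prod_restrict, lintegral_prod _ (by fun_prop),
    show -π + 2 * π = π by ring]
  exact lintegral_congr fun r => setLIntegral_congr Ioo_ae_eq_Ioc

lemma lintegral_comp_doubleAngle {F : ℝ × ℝ → ℝ≥0∞} (hF : Measurable F) :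
    ∫⁻ p, F (doubleAngle p) = ∫⁻ p, F p := by
  rw [lintegral_eq_lintegral_polarCoord_symm (F := fun p => F (doubleAngle p))
      (hF.comp measurable_doubleAngle),
    lintegral_eq_lintegral_polarCoord_symm hF]
  refine setLIntegral_congr_fun measurableSet_Ioi fun r (hr : 0 < r) => ?_
  simp only [doubleAngle_polarCoord_symm hr.le]
  have hper : Periodic (fun θ => ENNReal.ofReal r * F (polarCoord.symm (r, θ))) (2 * π) :=
    fun θ => by simp [polarCoord_symm_apply]
  exact_mod_cast hper.setLIntegral_Ioc_comp_mul_int two_pi_pos (by fun_prop) two_ne_zero (-π)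

theorem measurePreserving_doubleAngle :
    MeasurePreserving doubleAngle (volume : Measure (ℝ × ℝ)) volume :=
  ⟨measurable_doubleAngle, Measure.ext_of_lintegral _ fun F hF => by
    rw [lintegral_map hF measurable_doubleAngle, lintegral_comp_doubleAngle hF]⟩

lemma gaussianReal_prod_gaussianReal {v : ℝ≥0} (hv : v ≠ 0) :
    (gaussianReal 0 v).prod (gaussianReal 0 v) = volume.withDensity
      fun p => ENNReal.ofReal ((2 * π * v)⁻¹ * exp (-(p.1 ^ 2 + p.2 ^ 2) / (2 * v))) := by
  rw [gaussianReal_of_var_ne_zero 0 hv, prod_withDensity (measurable_gaussianPDF 0 v)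
    (measurable_gaussianPDF 0 v), ← Measure.volume_eq_prod]
  congr with p
  rw [gaussianPDF, gaussianPDF, ← ENNReal.ofReal_mul (gaussianPDFReal_nonneg _ _ _),
    gaussianPDFReal, gaussianPDFReal]
  congr 1
  rw [mul_mul_mul_comm, ← mul_inv, mul_self_sqrt (by positivity), ← exp_add]
  ring_nf

theorem measurePreserving_doubleAngle_gaussianReal {v : ℝ≥0} (hv : v ≠ 0) :
    MeasurePreserving doubleAngle ((gaussianReal 0 v).prod (gaussianReal 0 v))
      ((gaussianReal 0 v).prod (gaussianReal 0 v)) := by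
  set ρ : ℝ × ℝ → ℝ≥0∞ :=
    fun p => ENNReal.ofReal ((2 * π * v)⁻¹ * exp (-(p.1 ^ 2 + p.2 ^ 2) / (2 * v)))
  have hρ : ρ ∘ doubleAngle = ρ := by
    funext p; simp only [ρ, comp_apply, sq_add_sq_doubleAngle]
  have := measurePreserving_doubleAngle.withDensity_comp (ρ := ρ) (by fun_prop)
  rwa [hρ, ← gaussianReal_prod_gaussianReal hv] at this

theorem map_mul_div_sqrt_gaussianReal_prod {v : ℝ≥0} (hv : v ≠ 0) :
    ((gaussianReal 0 v).prod (gaussianReal 0 v)).map (fun p => p.1 * p.2 / √(p.1 ^ 2 + p.2 ^ 2))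
      = gaussianReal 0 (v / 4) := by
  have : (fun p : ℝ × ℝ => p.1 * p.2 / √(p.1 ^ 2 + p.2 ^ 2))
      = (fun x => 2⁻¹ * x) ∘ Prod.snd ∘ doubleAngle := by
    funext p; simp only [doubleAngle, comp_apply]; ring
  rw [this, ← Measure.map_map (by fun_prop) (by fun_prop),
    ← Measure.map_map measurable_snd measurable_doubleAngle,
    (measurePreserving_doubleAngle_gaussianReal hv).map_eq, Measure.map_snd_prod,
    measure_univ, one_smul, gaussianReal_map_const_mul]
  congr 1
  · simp
  · ext; simp; ring

theorem stmt0_general {Ω : Type*} [MeasurableSpace Ω] (P : Measure Ω) [IsProbabilityMeasure P]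
    (Z1 Z2 : Ω → ℝ)
    (hind : IndepFun Z1 Z2 P)
    (h1 : Measure.map Z1 P = gaussianReal 0 1)
    (h2 : Measure.map Z2 P = gaussianReal 0 1) :
    Measure.map (fun ω => Z1 ω * Z2 ω / Real.sqrt (Z1 ω ^ 2 + Z2 ω ^ 2)) P
      = gaussianReal 0 (1 / 4) := by
  have hZ1 : AEMeasurable Z1 P := .of_map_ne_zero (h1 ▸ IsProbabilityMeasure.ne_zero _)
  have hZ2 : AEMeasurable Z2 P := .of_map_ne_zero (h2 ▸ IsProbabilityMeasure.ne_zero _)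
  have hpair : P.map (fun ω => (Z1 ω, Z2 ω)) = (gaussianReal 0 1).prod (gaussianReal 0 1) := by
    rw [(indepFun_iff_map_prod_eq_prod_map_map hZ1 hZ2).mp hind, h1, h2]
  calc P.map (fun ω => Z1 ω * Z2 ω / √(Z1 ω ^ 2 + Z2 ω ^ 2))
      = (P.map fun ω => (Z1 ω, Z2 ω)).map fun p => p.1 * p.2 / √(p.1 ^ 2 + p.2 ^ 2) := by
        rw [AEMeasurable.map_map_of_aemeasurable (by fun_prop) (hZ1.prodMk hZ2)]; rfl
    _ = gaussianReal 0 (1 / 4) := by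
      rw [hpair, map_mul_div_sqrt_gaussianReal_prod one_ne_zero]

theorem stmt0 {Ω : Type*} [MeasurableSpace Ω] (P : Measure Ω) [IsProbabilityMeasure P]
    (Z1 Z2 : Ω → ℝ) (hZ1 : Measurable Z1) (hZ2 : Measurable Z2)
    (hind : IndepFun Z1 Z2 P)
    (h1 : Measure.map Z1 P = gaussianReal 0 1)
    (h2 : Measure.map Z2 P = gaussianReal 0 1) :
    Measure.map (fun ω => Z1 ω * Z2 ω / Real.sqrt (Z1 ω ^ 2 + Z2 ω ^ 2)) P
      = gaussianReal 0 (1 / 4) :=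
  stmt0_general P Z1 Z2 hind h1 h2
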